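/- arXiv:2507.11220 — 2 statements merged into one kernel-verified Lean document; each statement's English description precedes it below -/
import Mathlib

section
/- Every complete metrizable space X is homeomorphic to a closed subspace of C_p(K) for some compact Hausdorff space K, where C_p(K) denotes the space of continuous real-valued functions on K with the topology of pointwise convergence. -/
/-!
Take for `K` the 1-Lipschitz functions `X → [-1, 1]`, compact in the pointwise topology, and send
`x` to evaluation at `x`. The functions `min (infDist · A) 1` lie in `K`; with `A = {x}` they show
that evaluation is an embedding. If `g` lies in the closure of the image, consider the filter `F`
of points whose evaluations approach `g`. Along finite sets `t`, `min (infDist · t) 1` tends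
pointwise to `0 = min (infDist · X) 1`, so continuity of `g` yields for every `ε` a point `z`
with `g (min (dist · z) 1) < ε`, whence `F` is eventually in `ball z ε`. So `F` is Cauchy, it
converges to some `x` by completeness, and evaluation at `x` is `g`.
-/

open Metric Set Topology Filter

namespace LipschitzEval

variable {X : Type*} [MetricSpace X]

variable (X) in
def lipschitzUnitBall : Set (X → ℝ) :=
  {f | LipschitzWith 1 f} ∩ univ.pi fun _ => Icc (-1) 1

theorem isCompact_lipschitzUnitBall : IsCompact (lipschitzUnitBall X) :=
  (isCompact_univ_pi fun _ => isCompact_Icc).of_isClosed_subset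
    ((isClosed_setOfPred_lipschitzWith 1).inter (isClosed_set_pi fun _ _ => isClosed_Icc))
    inter_subset_right

noncomputable def truncInfDist (A : Set X) : lipschitzUnitBall X :=
  ⟨fun w => min (infDist w A) 1, (lipschitz_infDist_pt A).min_const 1,
    fun _ _ => ⟨neg_one_lt_zero.le.trans (le_min infDist_nonneg zero_le_one), min_le_right _ _⟩⟩

theorem truncInfDist_apply (A : Set X) (w : X) : (truncInfDist A).1 w = min (infDist w A) 1 :=
  rfl

theorem tendsto_truncInfDist_finset :
    Tendsto (fun t : Finset X => truncInfDist (t : Set X)) atTop (𝓝 (truncInfDist univ)) := by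
  refine tendsto_subtype_rng.2 (tendsto_pi_nhds.2 fun w => tendsto_const_nhds.congr' ?_)
  filter_upwards [eventually_ge_atTop {w}] with t ht
  simp [truncInfDist_apply, infDist_zero_of_mem (ht (Finset.mem_singleton_self w)),
    infDist_zero_of_mem (mem_univ w)]

variable (X) in
def evalMap (x : X) : {g : lipschitzUnitBall X → ℝ // Continuous g} :=
  ⟨fun f => f.1 x, (continuous_apply x).comp continuous_subtype_val⟩

theorem continuous_evalMap : Continuous (evalMap X) :=
  (continuous_pi fun f => f.2.1.continuous).subtype_mk _

theorem tendsto_comap_evalMap (g : {g : lipschitzUnitBall X → ℝ // Continuous g})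
    (f : lipschitzUnitBall X) :
    Tendsto (fun x => f.1 x) (comap (evalMap X) (𝓝 g)) (𝓝 (g.1 f)) :=
  (((continuous_apply f).comp continuous_subtype_val).tendsto g).comp
    (tendsto_comap : Tendsto (evalMap X) _ _)

theorem eventually_dist_lt_of_truncInfDist_lt {g : {g : lipschitzUnitBall X → ℝ // Continuous g}}
    {z : X} {ε : ℝ} (hε : ε ≤ 1) (h : g.1 (truncInfDist {z}) < ε) :
    ∀ᶠ x in comap (evalMap X) (𝓝 g), dist x z < ε := by
  filter_upwards [(tendsto_comap_evalMap g _).eventually_lt_const h] with x hx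
  simpa [truncInfDist_apply, infDist_singleton, hε.not_gt] using hx

theorem isEmbedding_evalMap : IsEmbedding (evalMap X) := by
  refine IsInducing.isEmbedding (isInducing_iff_nhds.2 fun x =>
    le_antisymm (continuous_evalMap.tendsto x).le_comap (nhds_basis_ball.ge_iff.2 fun ε hε => ?_))
  have hx : (evalMap X x).1 (truncInfDist {x}) < min ε 1 := by
    simpa [evalMap, truncInfDist_apply] using hε
  exact (eventually_dist_lt_of_truncInfDist_lt (min_le_right _ _) hx).mono
    fun y hy => mem_ball.2 (hy.trans_le (min_le_left _ _))

theorem exists_truncInfDist_singleton_lt {g : {g : lipschitzUnitBall X → ℝ // Continuous g}}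
    [(comap (evalMap X) (𝓝 g)).NeBot] {ε : ℝ} (hε : 0 < ε) (hε₁ : ε ≤ 1) :
    ∃ z, g.1 (truncInfDist {z}) < ε := by
  have hzero : g.1 (truncInfDist univ) = 0 :=
    tendsto_nhds_unique (tendsto_comap_evalMap g _)
      (by simp [truncInfDist_apply, infDist_zero_of_mem (mem_univ _)])
  obtain ⟨x₀⟩ : Nonempty X := (comap (evalMap X) (𝓝 g)).nonempty_of_neBot
  -- `t` must contain `x₀`, since `infDist x ∅ = 0`.
  obtain ⟨t, hx₀t, ht⟩ := ((eventually_ge_atTop {x₀}).and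
    (((g.2.tendsto _).comp tendsto_truncInfDist_finset).eventually_lt_const
      (hzero ▸ half_pos hε))).exists
  obtain ⟨x, hxt, happrox⟩ := (((tendsto_comap_evalMap g _).eventually_lt_const ht).and
    (t.eventually_all.2 fun z _ => (tendsto_comap_evalMap g (truncInfDist {z})).eventually_const_lt
      (sub_lt_self _ (half_pos hε)))).exists
  have hxt' : infDist x t < ε / 2 := by
    simpa [truncInfDist_apply, (show ε / 2 ≤ 1 by linarith).not_gt] using hxt
  obtain ⟨z, hz, hxz⟩ := (infDist_lt_iff ⟨x₀, by simpa using hx₀t⟩).1 hxt'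
  have hgz := happrox z hz
  simp only [truncInfDist_apply, infDist_singleton] at hgz
  exact ⟨z, by linarith [min_le_left (dist x z) 1]⟩

theorem cauchy_comap_evalMap {g : {g : lipschitzUnitBall X → ℝ // Continuous g}}
    [(comap (evalMap X) (𝓝 g)).NeBot] : Cauchy (comap (evalMap X) (𝓝 g)) := by
  refine Metric.cauchy_iff.2 ⟨inferInstance, fun ε hε => ?_⟩
  have hδ : 0 < min (ε / 2) 1 := lt_min (half_pos hε) one_pos
  obtain ⟨z, hz⟩ := exists_truncInfDist_singleton_lt (g := g) hδ (min_le_right _ _)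
  refine ⟨_, eventually_dist_lt_of_truncInfDist_lt (min_le_right _ _) hz, fun x hx y hy => ?_⟩
  linarith [dist_triangle_right x y z, min_le_left (ε / 2) 1, hx.out, hy.out]

theorem isClosed_range_evalMap [CompleteSpace X] : IsClosed (range (evalMap X)) := by
  refine isClosed_of_closure_subset fun g hg => ?_
  have : (comap (evalMap X) (𝓝 g)).NeBot := comap_neBot fun s hs => by
    obtain ⟨_, hs, x, rfl⟩ := mem_closure_iff_nhds.1 hg s hs
    exact ⟨x, hs⟩
  obtain ⟨x, hx⟩ := CompleteSpace.complete (cauchy_comap_evalMap (g := g))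
  exact ⟨x, tendsto_nhds_unique ((continuous_evalMap.tendsto x).mono_left hx) tendsto_comap⟩

end LipschitzEval

open LipschitzEval in
/-- Every complete metrizable space is homeomorphic to a closed subspace of `C_p(K)`
for some compact Hausdorff space `K`, where `C_p(K)` is the space of continuous
real-valued functions on `K` with the topology of pointwise convergence (i.e. as a
subspace of `K → ℝ` with the product topology). -/
theorem stmt_4 {X : Type u} [MetricSpace X] [CompleteSpace X] :
    ∃ (K : Type u) (_ : TopologicalSpace K), CompactSpace K ∧ T2Space K ∧
      ∃ φ : X → {g : K → ℝ // Continuous g},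
        Topology.IsEmbedding φ ∧ IsClosed (Set.range φ) :=
  ⟨lipschitzUnitBall X, inferInstance, isCompact_iff_compactSpace.1 isCompact_lipschitzUnitBall,
    inferInstance, evalMap X, isEmbedding_evalMap, isClosed_range_evalMap⟩
end

section
/- Let κ be an uncountable cardinal, S the Σ-product { f ∈ [0,1]^κ : {α : f(α) ≠ 0} is countable }, 𝟙 the constant-one function, and X = S ∪ {𝟙} with the subspace topology of [0,1]^κ. Then the function f : X → ℝ defined by f(s) = 0 for s ∈ S and f(𝟙) = 1 is not continuous, but for every countable subset A ⊆ X there exists a continuous function g : X → ℝ with g|_A = f|_A. -/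
open Classical in
/-- On `X = S ∪ {𝟙}` (Σ-product plus the constant-one function, as a subspace of
`[0,1]^ι`), the function `f` which is `0` on `S` and `1` at `𝟙` is not continuous,
yet for every countable `A ⊆ X` there is a continuous `g : X → ℝ` agreeing with `f`
on `A`. -/
theorem stmt_12 {ι : Type*} [Uncountable ι] :
    let one : ι → Set.Icc (0 : ℝ) 1 := fun _ => ⟨1, by norm_num⟩
    let Xs : Set (ι → Set.Icc (0 : ℝ) 1) :=
      {f | {α | f α ≠ 0}.Countable} ∪ {one}
    let f : Xs → ℝ := fun x => if (x : ι → Set.Icc (0 : ℝ) 1) = one then 1 else 0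
    ¬ Continuous f ∧
      ∀ A : Set Xs, A.Countable →
        ∃ g : Xs → ℝ, Continuous g ∧ ∀ a ∈ A, g a = f a := by
  intro one Xs f
  constructor
  · intro hc
    have hone : one ∈ Xs := Or.inr rfl
    have hV : IsOpen (f ⁻¹' Set.Ioi (1/2 : ℝ)) := hc.isOpen_preimage _ isOpen_Ioi
    obtain ⟨W, hW, hWeq⟩ := isOpen_induced_iff.mp hV
    have honeW : one ∈ W := by
      have : (⟨one, hone⟩ : Xs) ∈ f ⁻¹' Set.Ioi (1/2 : ℝ) := by
        simp only [Set.mem_preimage, f, if_pos rfl, Set.mem_Ioi]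
        norm_num
      rw [← hWeq] at this
      exact this
    obtain ⟨I, u, h1, h2⟩ := isOpen_pi_iff.mp hW one honeW
    set p : ι → Set.Icc (0 : ℝ) 1 := fun α => if α ∈ I then one α else 0 with hp
    have hpS : p ∈ Xs := by
      left
      apply Set.Countable.mono _ I.countable_toSet
      intro α hα
      by_contra hI
      exact hα (if_neg hI)
    have hpW : p ∈ W := by
      apply h2
      intro a ha
      have : p a = one a := if_pos (Finset.mem_coe.mp ha)
      rw [this]
      exact (h1 a (Finset.mem_coe.mp ha)).2
    have hpne : p ≠ one := by
      obtain ⟨γ, hγ⟩ : ∃ γ : ι, γ ∉ I := by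
        by_contra h
        push_neg at h
        exact (Set.not_countable_univ (α := ι))
          (Set.Countable.mono (fun x _ => h x) I.countable_toSet)
      intro h
      have := congrFun h γ
      simp only [p, if_neg hγ] at this
      have : (0 : ℝ) = 1 := congrArg Subtype.val this
      norm_num at this
    have : (⟨p, hpS⟩ : Xs) ∈ f ⁻¹' Set.Ioi (1/2 : ℝ) := by
      rw [← hWeq]; exact hpW
    simp only [Set.mem_preimage, f, Set.mem_Ioi, if_neg hpne] at this
    norm_num at this
  · intro A hA
    set T : Set ι := ⋃ a ∈ {a ∈ A | {α | (a : ι → Set.Icc (0 : ℝ) 1) α ≠ 0}.Countable},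
      {α | (a : ι → Set.Icc (0 : ℝ) 1) α ≠ 0} with hT
    have hTc : T.Countable := Set.Countable.biUnion (hA.mono (Set.sep_subset _ _))
      (fun a ha => ha.2)
    obtain ⟨γ, hγ⟩ : ∃ γ : ι, γ ∉ T := by
      by_contra h
      push_neg at h
      exact Set.not_countable_univ (hTc.mono fun x _ => h x)
    refine ⟨fun x => max (2 * ((x : ι → Set.Icc (0 : ℝ) 1) γ : ℝ) - 1) 0, ?_, ?_⟩
    · have hcoe : Continuous fun x : Xs => ((x : ι → Set.Icc (0 : ℝ) 1) γ : ℝ) :=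
        continuous_subtype_val.comp ((continuous_apply γ).comp continuous_subtype_val)
      exact ((continuous_const.mul hcoe).sub continuous_const).max continuous_const
    · intro a ha
      by_cases h : (a : ι → Set.Icc (0 : ℝ) 1) = one
      · simp only [f, if_pos h, h]
        norm_num [one]
      · have haS : {α | (a : ι → Set.Icc (0 : ℝ) 1) α ≠ 0}.Countable := by
          rcases a.2 with h' | h'
          · exact h'
          · exact absurd h' h
        have hzero : (a : ι → Set.Icc (0 : ℝ) 1) γ = 0 := by
          by_contra hz
          exact hγ (Set.mem_biUnion ⟨ha, haS⟩ hz)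
        simp only [f, if_neg h, hzero]
        norm_num
end
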